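/- arXiv:math/0410579 — 3 statements merged into one kernel-verified Lean document; each statement's English description precedes it below -/
import Mathlib

section
/- Let GL(n,ℝ) act on V = Λ²(ℝⁿ)* ⊗ ℝⁿ by g·μ(X,Y) = g μ(g⁻¹X, g⁻¹Y), and give V the inner product ⟨μ,λ⟩ = Σ_{ijk}⟨μ(X_i,X_j),X_k⟩⟨λ(X_i,X_j),X_k⟩ for an orthonormal basis. Then for any symmetric matrix A, the derivative at t=0 of t ↦ ‖exp(tA)·μ‖² equals tr(M A), where M = -4 Σ_i (ad_μ X_i)ᵀ (ad_μ X_i) + 2 Σ_i (ad_μ X_i)(ad_μ X_i)ᵀ and ad_μ X (Y) = μ(X,Y). -/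
open RealInnerProductSpace Finset

section Aux

variable {n : ℕ}

local notation "E" => EuclideanSpace ℝ (Fin n)
local notation "bb" => EuclideanSpace.basisFun (Fin n) ℝ

lemma aux_trace_eq (T : E →ₗ[ℝ] E) :
    LinearMap.trace ℝ E T = ∑ k, ⟪T (bb k), bb k⟫ := by
  rw [LinearMap.trace_eq_matrix_trace ℝ ((EuclideanSpace.basisFun (Fin n) ℝ).toBasis)]
  simp [Matrix.trace, Matrix.diag, LinearMap.toMatrix_apply, EuclideanSpace.inner_single_right,
    real_inner_comm, EuclideanSpace.basisFun_apply]

lemma aux_inner_expand (x y : E) :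
    ⟪x, y⟫ = ∑ m, ⟪x, bb m⟫ * ⟪y, bb m⟫ := by
  simp [PiLp.inner_apply, EuclideanSpace.basisFun_apply, EuclideanSpace.inner_single_right,
    RCLike.inner_apply, conj_trivial]
  exact Finset.sum_congr rfl fun _ _ => mul_comm _ _

end Aux

lemma aux_algebra {n : ℕ} (c e f g : Fin n → Fin n → Fin n → ℝ)
    (hcs : ∀ i j k, c i j k = - c j i k)
    (hfe : ∀ i j k, f i j k = - e j i k) :
    (∑ i, ∑ j, ∑ k, 2 * c i j k * (g i j k - f i j k - e i j k))
      = ∑ k, (-4 * ∑ i, ∑ j, e i k j * c i k j + 2 * ∑ i, ∑ j, g i j k * c i j k) := by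
  have h1 : ∑ k : Fin n, ∑ i : Fin n, ∑ j : Fin n, (e i k j * c i k j : ℝ)
      = ∑ i : Fin n, ∑ j : Fin n, ∑ k : Fin n, e i j k * c i j k := by
    rw [Finset.sum_comm]
  have h2 : ∑ k : Fin n, ∑ i : Fin n, ∑ j : Fin n, (g i j k * c i j k : ℝ)
      = ∑ i : Fin n, ∑ j : Fin n, ∑ k : Fin n, g i j k * c i j k := by
    rw [Finset.sum_comm]
    exact Finset.sum_congr rfl fun i _ => Finset.sum_comm
  have h3 : ∑ i : Fin n, ∑ j : Fin n, ∑ k : Fin n, (2 * c i j k * f i j k : ℝ)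
      = ∑ i : Fin n, ∑ j : Fin n, ∑ k : Fin n, 2 * c i j k * e i j k := by
    rw [Finset.sum_comm]
    apply Finset.sum_congr rfl; intro a _
    apply Finset.sum_congr rfl; intro b _
    apply Finset.sum_congr rfl; intro k _
    rw [hcs b a k, hfe b a k]; ring
  have expand : (∑ i : Fin n, ∑ j : Fin n, ∑ k : Fin n,
        2 * c i j k * (g i j k - f i j k - e i j k))
      = (∑ i : Fin n, ∑ j : Fin n, ∑ k : Fin n, 2 * c i j k * g i j k)
        - (∑ i : Fin n, ∑ j : Fin n, ∑ k : Fin n, 2 * c i j k * f i j k)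
        - (∑ i : Fin n, ∑ j : Fin n, ∑ k : Fin n, 2 * c i j k * e i j k) := by
    simp only [mul_sub, Finset.sum_sub_distrib]
  have rhs : (∑ k : Fin n, (-4 * ∑ i : Fin n, ∑ j : Fin n, (e i k j * c i k j : ℝ)
        + 2 * ∑ i : Fin n, ∑ j : Fin n, g i j k * c i j k))
      = -4 * (∑ i : Fin n, ∑ j : Fin n, ∑ k : Fin n, e i j k * c i j k)
        + 2 * (∑ i : Fin n, ∑ j : Fin n, ∑ k : Fin n, g i j k * c i j k) := by
    rw [Finset.sum_add_distrib, ← Finset.mul_sum, ← Finset.mul_sum, h1, h2]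
  have ce : (∑ i : Fin n, ∑ j : Fin n, ∑ k : Fin n, (2 * c i j k * e i j k : ℝ))
      = 2 * ∑ i : Fin n, ∑ j : Fin n, ∑ k : Fin n, e i j k * c i j k := by
    rw [Finset.mul_sum]; apply Finset.sum_congr rfl; intro i _
    rw [Finset.mul_sum]; apply Finset.sum_congr rfl; intro j _
    rw [Finset.mul_sum]; apply Finset.sum_congr rfl; intro k _
    ring
  have cg : (∑ i : Fin n, ∑ j : Fin n, ∑ k : Fin n, (2 * c i j k * g i j k : ℝ))
      = 2 * ∑ i : Fin n, ∑ j : Fin n, ∑ k : Fin n, g i j k * c i j k := by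
    rw [Finset.mul_sum]; apply Finset.sum_congr rfl; intro i _
    rw [Finset.mul_sum]; apply Finset.sum_congr rfl; intro j _
    rw [Finset.mul_sum]; apply Finset.sum_congr rfl; intro k _
    ring
  rw [expand, rhs, h3, ce, cg]; ring


set_option maxHeartbeats 1000000 in
lemma key_lemma {n : ℕ}
    (μ : EuclideanSpace ℝ (Fin n) →ₗ[ℝ] EuclideanSpace ℝ (Fin n) →ₗ[ℝ]
      EuclideanSpace ℝ (Fin n))
    (hskew : ∀ X Y, μ X Y = - μ Y X)
    (A : EuclideanSpace ℝ (Fin n) →L[ℝ] EuclideanSpace ℝ (Fin n))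
    (hA : ContinuousLinearMap.adjoint A = A)
    (b : OrthonormalBasis (Fin n) ℝ (EuclideanSpace ℝ (Fin n)))
    (hb : b = EuclideanSpace.basisFun (Fin n) ℝ) :
    (∑ i, ∑ j, ∑ k, 2 * ⟪μ (b i) (b j), b k⟫ *
      (⟪A (μ (b i) (b j)), b k⟫ - ⟪μ (A (b i)) (b j), b k⟫ - ⟪μ (b i) (A (b j)), b k⟫)) =
      LinearMap.trace ℝ (EuclideanSpace ℝ (Fin n))
        ((((-4 : ℝ) • ∑ i, (ContinuousLinearMap.adjoint
              (LinearMap.toContinuousLinearMap (μ (b i)))) ∘L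
              (LinearMap.toContinuousLinearMap (μ (b i)))
          + (2 : ℝ) • ∑ i, (LinearMap.toContinuousLinearMap (μ (b i))) ∘L
              (ContinuousLinearMap.adjoint (LinearMap.toContinuousLinearMap (μ (b i))))) ∘L A :
            EuclideanSpace ℝ (Fin n) →L[ℝ] EuclideanSpace ℝ (Fin n)) :
          EuclideanSpace ℝ (Fin n) →ₗ[ℝ] EuclideanSpace ℝ (Fin n)) := by
  subst hb
  rw [aux_trace_eq]
  -- self-adjointness of A in inner-product form
  have hAsym : ∀ x y : EuclideanSpace ℝ (Fin n), ⟪A x, y⟫ = ⟪x, A y⟫ := by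
    intro x y
    rw [← ContinuousLinearMap.adjoint_inner_right, hA]
  simp only [ContinuousLinearMap.coe_coe, ContinuousLinearMap.comp_apply,
    ContinuousLinearMap.add_apply, ContinuousLinearMap.coe_smul', Pi.smul_apply,
    ContinuousLinearMap.coe_sum', Finset.sum_apply, inner_add_left, real_inner_smul_left,
    sum_inner, smul_eq_mul]
  have hT1 : ∀ i k : Fin n,
      ⟪(ContinuousLinearMap.adjoint (LinearMap.toContinuousLinearMap
          (μ (EuclideanSpace.basisFun (Fin n) ℝ i))))
        ((LinearMap.toContinuousLinearMap (μ (EuclideanSpace.basisFun (Fin n) ℝ i)))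
          (A (EuclideanSpace.basisFun (Fin n) ℝ k))), EuclideanSpace.basisFun (Fin n) ℝ k⟫
      = ∑ j, ⟪μ (EuclideanSpace.basisFun (Fin n) ℝ i) (A (EuclideanSpace.basisFun (Fin n) ℝ k)),
            EuclideanSpace.basisFun (Fin n) ℝ j⟫ *
          ⟪μ (EuclideanSpace.basisFun (Fin n) ℝ i) (EuclideanSpace.basisFun (Fin n) ℝ k),
            EuclideanSpace.basisFun (Fin n) ℝ j⟫ := by
    intro i k
    rw [ContinuousLinearMap.adjoint_inner_left, aux_inner_expand]
    simp [LinearMap.coe_toContinuousLinearMap']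
  have hT2 : ∀ i k : Fin n,
      ⟪(LinearMap.toContinuousLinearMap (μ (EuclideanSpace.basisFun (Fin n) ℝ i)))
        ((ContinuousLinearMap.adjoint (LinearMap.toContinuousLinearMap
            (μ (EuclideanSpace.basisFun (Fin n) ℝ i))))
          (A (EuclideanSpace.basisFun (Fin n) ℝ k))), EuclideanSpace.basisFun (Fin n) ℝ k⟫
      = ∑ j, ⟪A (EuclideanSpace.basisFun (Fin n) ℝ k),
            μ (EuclideanSpace.basisFun (Fin n) ℝ i) (EuclideanSpace.basisFun (Fin n) ℝ j)⟫ *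
          ⟪EuclideanSpace.basisFun (Fin n) ℝ k,
            μ (EuclideanSpace.basisFun (Fin n) ℝ i) (EuclideanSpace.basisFun (Fin n) ℝ j)⟫ := by
    intro i k
    rw [← ContinuousLinearMap.adjoint_inner_right, aux_inner_expand]
    simp [ContinuousLinearMap.adjoint_inner_left, LinearMap.coe_toContinuousLinearMap']
  simp only [hT1, hT2]
  have hg2 : ∀ k i j : Fin n,
      ⟪A (EuclideanSpace.basisFun (Fin n) ℝ k),
          μ (EuclideanSpace.basisFun (Fin n) ℝ i) (EuclideanSpace.basisFun (Fin n) ℝ j)⟫ *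
        ⟪EuclideanSpace.basisFun (Fin n) ℝ k,
          μ (EuclideanSpace.basisFun (Fin n) ℝ i) (EuclideanSpace.basisFun (Fin n) ℝ j)⟫
      = ⟪A (μ (EuclideanSpace.basisFun (Fin n) ℝ i) (EuclideanSpace.basisFun (Fin n) ℝ j)),
          EuclideanSpace.basisFun (Fin n) ℝ k⟫ *
        ⟪μ (EuclideanSpace.basisFun (Fin n) ℝ i) (EuclideanSpace.basisFun (Fin n) ℝ j),
          EuclideanSpace.basisFun (Fin n) ℝ k⟫ := by
    intro k i j
    rw [hAsym]
    exact congrArg₂ HMul.hMul (real_inner_comm _ _) (real_inner_comm _ _)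
  simp only [hg2]
  refine aux_algebra
    (fun i j k => ⟪μ (EuclideanSpace.basisFun (Fin n) ℝ i) (EuclideanSpace.basisFun (Fin n) ℝ j),
      EuclideanSpace.basisFun (Fin n) ℝ k⟫)
    (fun i j k => ⟪μ (EuclideanSpace.basisFun (Fin n) ℝ i) (A (EuclideanSpace.basisFun (Fin n) ℝ j)),
      EuclideanSpace.basisFun (Fin n) ℝ k⟫)
    (fun i j k => ⟪μ (A (EuclideanSpace.basisFun (Fin n) ℝ i)) (EuclideanSpace.basisFun (Fin n) ℝ j),
      EuclideanSpace.basisFun (Fin n) ℝ k⟫)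
    (fun i j k => ⟪A (μ (EuclideanSpace.basisFun (Fin n) ℝ i) (EuclideanSpace.basisFun (Fin n) ℝ j)),
      EuclideanSpace.basisFun (Fin n) ℝ k⟫)
    ?_ ?_
  · intro i j k
    rw [hskew (EuclideanSpace.basisFun (Fin n) ℝ i) (EuclideanSpace.basisFun (Fin n) ℝ j),
      inner_neg_left]
  · intro i j k
    rw [hskew (A (EuclideanSpace.basisFun (Fin n) ℝ i)) (EuclideanSpace.basisFun (Fin n) ℝ j),
      inner_neg_left]


set_option maxHeartbeats 1000000 in
/-- the derivative at `t = 0` of `t ↦ ‖exp(tA)·μ‖²` equals `tr(MA)`,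
where `M = -4 Σᵢ (ad_μ Xᵢ)ᵀ(ad_μ Xᵢ) + 2 Σᵢ (ad_μ Xᵢ)(ad_μ Xᵢ)ᵀ`. -/
theorem deriv_norm_sq_action {n : ℕ}
    (μ : EuclideanSpace ℝ (Fin n) →ₗ[ℝ] EuclideanSpace ℝ (Fin n) →ₗ[ℝ]
      EuclideanSpace ℝ (Fin n))
    (hskew : ∀ X Y, μ X Y = - μ Y X)
    (A : EuclideanSpace ℝ (Fin n) →L[ℝ] EuclideanSpace ℝ (Fin n))
    (hA : ContinuousLinearMap.adjoint A = A) :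
    letI b := EuclideanSpace.basisFun (Fin n) ℝ
    letI ad : Fin n → (EuclideanSpace ℝ (Fin n) →L[ℝ] EuclideanSpace ℝ (Fin n)) :=
      fun i => LinearMap.toContinuousLinearMap (μ (b i))
    letI M : EuclideanSpace ℝ (Fin n) →L[ℝ] EuclideanSpace ℝ (Fin n) :=
      (-4 : ℝ) • ∑ i, (ContinuousLinearMap.adjoint (ad i)) ∘L (ad i)
        + (2 : ℝ) • ∑ i, (ad i) ∘L (ContinuousLinearMap.adjoint (ad i))
    HasDerivAt (fun t : ℝ => ∑ i, ∑ j, ∑ k,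
        ⟪(NormedSpace.exp (t • A))
          (μ ((NormedSpace.exp (-(t • A))) (b i))
             ((NormedSpace.exp (-(t • A))) (b j))), b k⟫ ^ 2)
      (LinearMap.trace ℝ (EuclideanSpace ℝ (Fin n)) ((M ∘L A : _ →L[ℝ] _) : _ →ₗ[ℝ] _))
      0 := by
  show HasDerivAt _ _ _
  set b := EuclideanSpace.basisFun (Fin n) ℝ with hb
  -- basic exponential facts
  have hz : ((0:ℝ) • A : EuclideanSpace ℝ (Fin n) →L[ℝ] EuclideanSpace ℝ (Fin n)) = 0 :=
    zero_smul ℝ A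
  have hexp0P : NormedSpace.exp ((0:ℝ) • A) = (1 : EuclideanSpace ℝ (Fin n) →L[ℝ] EuclideanSpace ℝ (Fin n)) := by
    rw [hz, NormedSpace.exp_zero]
  have hexp0N : NormedSpace.exp (-((0:ℝ) • A)) = (1 : EuclideanSpace ℝ (Fin n) →L[ℝ] EuclideanSpace ℝ (Fin n)) := by
    rw [hz, neg_zero, NormedSpace.exp_zero]
  have hexpP : HasDerivAt (fun t : ℝ => NormedSpace.exp (t • A)) A 0 := by
    simpa [hexp0P] using hasDerivAt_exp_smul_const (𝕂 := ℝ) A 0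
  have hexpN : HasDerivAt (fun t : ℝ => NormedSpace.exp (-(t • A))) (-A) 0 := by
    have h := hasDerivAt_exp_smul_const (𝕂 := ℝ) (-A) 0
    have e1 : ((0:ℝ) • (-A) : EuclideanSpace ℝ (Fin n) →L[ℝ] EuclideanSpace ℝ (Fin n)) = 0 :=
      zero_smul ℝ (-A)
    have e2 : (fun u : ℝ => NormedSpace.exp (u • (-A)))
        = fun t : ℝ => NormedSpace.exp (-(t • A)) := by
      funext t; rw [smul_neg]
    rw [e1, NormedSpace.exp_zero, one_mul, e2] at h
    exact h
  -- vector-level derivatives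
  have hu : ∀ v : EuclideanSpace ℝ (Fin n),
      HasDerivAt (fun t : ℝ => NormedSpace.exp (-(t • A)) v) (-(A v)) 0 := by
    intro v
    have h := hexpN.clm_apply (hasDerivAt_const (0:ℝ) v)
    simpa using h
  -- μ as a continuous bilinear map
  let Bl : EuclideanSpace ℝ (Fin n) →ₗ[ℝ]
      (EuclideanSpace ℝ (Fin n) →L[ℝ] EuclideanSpace ℝ (Fin n)) :=
    (LinearMap.toContinuousLinearMap.toLinearMap).comp μ
  let Bc := LinearMap.toContinuousLinearMap Bl
  have hBc : ∀ x y : EuclideanSpace ℝ (Fin n), Bc x y = μ x y := fun x y => rfl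
  have hg : ∀ i j, HasDerivAt
      (fun t : ℝ => μ (NormedSpace.exp (-(t • A)) (b i)) (NormedSpace.exp (-(t • A)) (b j)))
      (μ (-(A (b i))) (b j) + μ (b i) (-(A (b j)))) 0 := by
    intro i j
    have h1 : HasDerivAt (fun t : ℝ => Bc (NormedSpace.exp (-(t • A)) (b i)))
        (Bc (-(A (b i)))) 0 :=
      Bc.hasFDerivAt.comp_hasDerivAt 0 (hu (b i))
    have h2 := h1.clm_apply (hu (b j))
    simp only [hexp0N, ContinuousLinearMap.one_apply] at h2
    exact h2
  have hf : ∀ i j,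
      HasDerivAt (fun t : ℝ => NormedSpace.exp (t • A)
          (μ (NormedSpace.exp (-(t • A)) (b i)) (NormedSpace.exp (-(t • A)) (b j))))
        (A (μ (b i) (b j)) + (μ (-(A (b i))) (b j) + μ (b i) (-(A (b j))))) 0 := by
    intro i j
    have h3 := hexpP.clm_apply (hg i j)
    simp only [hexp0P, hexp0N, ContinuousLinearMap.one_apply] at h3
    exact h3
  -- per (i,j,k) derivative of the squared inner product
  set d : Fin n → Fin n → Fin n → ℝ := fun i j k =>
    2 * ⟪μ (b i) (b j), b k⟫ *
      (⟪A (μ (b i) (b j)), b k⟫ - ⟪μ (A (b i)) (b j), b k⟫ - ⟪μ (b i) (A (b j)), b k⟫) with hd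
  have hsq : ∀ i j k,
      HasDerivAt (fun t : ℝ =>
        ⟪NormedSpace.exp (t • A)
          (μ (NormedSpace.exp (-(t • A)) (b i)) (NormedSpace.exp (-(t • A)) (b j))), b k⟫ ^ 2)
        (d i j k) 0 := by
    intro i j k
    have h4 := (hf i j).inner (𝕜 := ℝ) (hasDerivAt_const (0:ℝ) (b k))
    simp only [hexp0P, hexp0N, ContinuousLinearMap.one_apply, inner_zero_right, zero_add] at h4
    have h5 := h4.fun_pow 2
    simp only [hexp0P, hexp0N, ContinuousLinearMap.one_apply] at h5
    refine h5.congr_deriv ?_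
    rw [hd]
    simp only [inner_add_left, map_neg, inner_neg_left, LinearMap.neg_apply]
    push_cast
    ring
  have hsum : HasDerivAt (fun t : ℝ => ∑ i, ∑ j, ∑ k,
      ⟪NormedSpace.exp (t • A)
        (μ (NormedSpace.exp (-(t • A)) (b i)) (NormedSpace.exp (-(t • A)) (b j))), b k⟫ ^ 2)
      (∑ i, ∑ j, ∑ k, d i j k) 0 := by
    apply HasDerivAt.fun_sum; intro i _
    apply HasDerivAt.fun_sum; intro j _
    apply HasDerivAt.fun_sum; intro k _
    exact hsq i j k
  -- it remains to identify the derivative with the trace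
  have key : (∑ i, ∑ j, ∑ k, d i j k) =
      LinearMap.trace ℝ (EuclideanSpace ℝ (Fin n))
        ((((-4 : ℝ) • ∑ i, (ContinuousLinearMap.adjoint
              (LinearMap.toContinuousLinearMap (μ (b i)))) ∘L
              (LinearMap.toContinuousLinearMap (μ (b i)))
          + (2 : ℝ) • ∑ i, (LinearMap.toContinuousLinearMap (μ (b i))) ∘L
              (ContinuousLinearMap.adjoint (LinearMap.toContinuousLinearMap (μ (b i))))) ∘L A :
            EuclideanSpace ℝ (Fin n) →L[ℝ] EuclideanSpace ℝ (Fin n)) :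
          EuclideanSpace ℝ (Fin n) →ₗ[ℝ] EuclideanSpace ℝ (Fin n)) := by
    rw [hd]
    exact key_lemma μ hskew A hA b hb
  rw [key] at hsum
  exact hsum
end

section
/- Let n be a finite-dimensional real nilpotent Lie algebra with inner product, Ric its Ricci operator. If D is a symmetric derivation of n, then tr(Ric ∘ D) = 0. -/
open RealInnerProductSpace Finset

/-- for a metric nilpotent Lie algebra, if `D` is a symmetric derivation
then `tr(Ric ∘ D) = 0`. -/
theorem trace_ric_comp_symmetric_derivation {n : ℕ} {V : Type*} [NormedAddCommGroup V]
    [InnerProductSpace ℝ V] [FiniteDimensional ℝ V]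
    (b : OrthonormalBasis (Fin n) ℝ V)
    (μ : V →ₗ[ℝ] V →ₗ[ℝ] V)
    (hskew : ∀ X Y : V, μ X Y = - μ Y X)
    (hjacobi : ∀ X Y Z : V, μ (μ X Y) Z + μ (μ Y Z) X + μ (μ Z X) Y = 0)
    (hnil : ∃ N : ℕ, ∀ X : V, (fun Y => μ X Y)^[N] = fun _ => (0 : V))
    (Ric : V →ₗ[ℝ] V)
    (hRic : ∀ X Y : V, ⟪Ric X, Y⟫ =
      -(1/2) * ∑ i, ∑ j, ⟪μ X (b i), b j⟫ * ⟪μ Y (b i), b j⟫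
        + (1/4) * ∑ i, ∑ j, ⟪μ (b i) (b j), X⟫ * ⟪μ (b i) (b j), Y⟫)
    (D : V →ₗ[ℝ] V) (hDsym : LinearMap.adjoint D = D)
    (hDder : ∀ X Y : V, D (μ X Y) = μ (D X) Y + μ X (D Y)) :
    LinearMap.trace ℝ V (Ric ∘ₗ D) = 0 := by
  classical
  -- inner product with D moves across
  have hDinner : ∀ X Y : V, ⟪D X, Y⟫ = ⟪X, D Y⟫ := by
    intro X Y
    conv_lhs => rw [← hDsym]
    exact LinearMap.adjoint_inner_left D Y X
  -- skew symmetry of structure constants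
  have hskew' : ∀ X Y Z : V, ⟪μ X Y, Z⟫ = -⟪μ Y X, Z⟫ := by
    intro X Y Z; rw [hskew]; simp
  -- expansion lemma
  have hexp : ∀ (X : V) (i j : Fin n),
      ⟪μ X (b i), b j⟫ = ∑ l, ⟪X, b l⟫ * ⟪μ (b l) (b i), b j⟫ := by
    intro X i j
    conv_lhs => rw [← b.sum_repr' X]
    simp [map_sum, LinearMap.sum_apply, sum_inner, inner_smul_left, real_inner_comm]
  -- trace via orthonormal basis
  have htr : LinearMap.trace ℝ V (Ric ∘ₗ D) = ∑ k, ⟪Ric (D (b k)), b k⟫ := by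
    rw [LinearMap.trace_eq_matrix_trace ℝ b.toBasis, Matrix.trace]
    simp [Matrix.diag, LinearMap.toMatrix_apply, OrthonormalBasis.coe_toBasis_repr_apply,
      OrthonormalBasis.repr_apply_apply, real_inner_comm]
  -- the master sum
  set S : ℝ := ∑ k, ∑ i, ∑ j, ∑ l,
      ⟪D (b k), b l⟫ * (⟪μ (b l) (b i), b j⟫ * ⟪μ (b k) (b i), b j⟫) with hS
  -- 3-fold rotation
  have rot3 : ∀ F : Fin n → Fin n → Fin n → ℝ,
      ∑ k, ∑ i, ∑ j, F k i j = ∑ i, ∑ j, ∑ k, F k i j := by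
    intro F
    rw [Finset.sum_comm]
    exact Finset.sum_congr rfl fun i _ => Finset.sum_comm
  -- first part
  have hAsum : ∑ k, ∑ i, ∑ j, ⟪μ (D (b k)) (b i), b j⟫ * ⟪μ (b k) (b i), b j⟫ = S := by
    rw [hS]
    refine Finset.sum_congr rfl fun k _ => Finset.sum_congr rfl fun i _ =>
      Finset.sum_congr rfl fun j _ => ?_
    rw [hexp (D (b k)) i j, Finset.sum_mul]
    exact Finset.sum_congr rfl fun l _ => by ring
  -- second part expansion
  have hB : ∀ (k i j : Fin n), ⟪μ (b i) (b j), D (b k)⟫ =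
      (∑ l, ⟪D (b i), b l⟫ * ⟪μ (b l) (b j), b k⟫)
        - ∑ l, ⟪D (b j), b l⟫ * ⟪μ (b l) (b i), b k⟫ := by
    intro k i j
    rw [← hDinner, hDder, inner_add_left, hexp (D (b i)) j k,
      hskew' (b i) (D (b j)) (b k), hexp (D (b j)) i k]
    ring
  have hP1 : ∑ k, ∑ i, ∑ j, (∑ l, ⟪D (b i), b l⟫ * ⟪μ (b l) (b j), b k⟫)
      * ⟪μ (b i) (b j), b k⟫ = S := by
    rw [hS]
    rw [rot3 fun k i j => (∑ l, ⟪D (b i), b l⟫ * ⟪μ (b l) (b j), b k⟫) * ⟪μ (b i) (b j), b k⟫]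
    refine Finset.sum_congr rfl fun i _ => Finset.sum_congr rfl fun j _ =>
      Finset.sum_congr rfl fun k _ => ?_
    rw [Finset.sum_mul]
    exact Finset.sum_congr rfl fun l _ => by ring
  have hP2 : ∑ k, ∑ i, ∑ j, (∑ l, ⟪D (b j), b l⟫ * ⟪μ (b l) (b i), b k⟫)
      * ⟪μ (b i) (b j), b k⟫ = -S := by
    have h1 : ∑ k, ∑ i, ∑ j, (∑ l, ⟪D (b j), b l⟫ * ⟪μ (b l) (b i), b k⟫)
        * ⟪μ (b i) (b j), b k⟫
        = ∑ k, ∑ i, ∑ j, (∑ l, ⟪D (b i), b l⟫ * ⟪μ (b l) (b j), b k⟫)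
        * ⟪μ (b j) (b i), b k⟫ :=
      Finset.sum_congr rfl fun k _ => Finset.sum_comm
    rw [h1, ← hP1, ← Finset.sum_neg_distrib]
    refine Finset.sum_congr rfl fun k _ => ?_
    rw [← Finset.sum_neg_distrib]
    refine Finset.sum_congr rfl fun i _ => ?_
    rw [← Finset.sum_neg_distrib]
    refine Finset.sum_congr rfl fun j _ => ?_
    rw [hskew' (b j) (b i) (b k)]
    ring
  -- put everything together
  rw [htr]
  have : ∀ k, ⟪Ric (D (b k)), b k⟫ =
      -(1/2) * ∑ i, ∑ j, ⟪μ (D (b k)) (b i), b j⟫ * ⟪μ (b k) (b i), b j⟫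
        + (1/4) * ∑ i, ∑ j,
          ((∑ l, ⟪D (b i), b l⟫ * ⟪μ (b l) (b j), b k⟫) * ⟪μ (b i) (b j), b k⟫
            - (∑ l, ⟪D (b j), b l⟫ * ⟪μ (b l) (b i), b k⟫) * ⟪μ (b i) (b j), b k⟫) := by
    intro k
    rw [hRic]
    congr 1
    congr 1
    refine Finset.sum_congr rfl fun i _ => Finset.sum_congr rfl fun j _ => ?_
    rw [hB k i j]
    ring
  simp only [this]
  rw [Finset.sum_add_distrib, ← Finset.mul_sum, ← Finset.mul_sum, hAsum]
  have hsplit : ∑ k, ∑ i, ∑ j,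
      ((∑ l, ⟪D (b i), b l⟫ * ⟪μ (b l) (b j), b k⟫) * ⟪μ (b i) (b j), b k⟫
        - (∑ l, ⟪D (b j), b l⟫ * ⟪μ (b l) (b i), b k⟫) * ⟪μ (b i) (b j), b k⟫)
      = S - (-S) := by
    simp only [Finset.sum_sub_distrib]
    rw [hP1, hP2]
  rw [hsplit]
  ring
end

section
/- Let n = n₁ ⊕ n₂ with brackets μ_t(X₁,X₃) = -t·s·Z₂, μ_t(X₂,X₃) = s·Z₁, μ_t(X₁,X₄) = s·Z₁, μ_t(X₂,X₄) = s(2-t)·Z₂, where s = √(2 + t² + (2-t)²), {X₁,...,X₄} an orthonormal basis of n₁ and {Z₁,Z₂} of n₂ = center. Then for t ∈ [1,2), the operator j_{μ_t}(Z) is invertible for every nonzero Z ∈ n₂, where ⟨j_{μ_t}(Z)X,Y⟩ = ⟨μ_t(X,Y),Z⟩. -/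
open RealInnerProductSpace

set_option maxHeartbeats 800000 in
/-- for the curve of complex nilpotent structures `μ_t` on `ℝ⁴ ⊕ ℝ²`,
with `t ∈ [1,2)` the map `j_{μ_t}(Z)` is invertible for every nonzero central `Z`. -/
theorem j_invertible_on_curve (t : ℝ) (ht1 : 1 ≤ t) (ht2 : t < 2)
    (μ : EuclideanSpace ℝ (Fin 4) →ₗ[ℝ] EuclideanSpace ℝ (Fin 4) →ₗ[ℝ]
      EuclideanSpace ℝ (Fin 2))
    (hskew : ∀ X Y, μ X Y = - μ Y X)
    (hs : ∀ (s : ℝ), s = Real.sqrt (2 + t ^ 2 + (2 - t) ^ 2) →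
      letI e : Fin 4 → EuclideanSpace ℝ (Fin 4) := fun i => EuclideanSpace.single i 1
      letI f : Fin 2 → EuclideanSpace ℝ (Fin 2) := fun i => EuclideanSpace.single i 1
      μ (e 0) (e 2) = (-(t * s)) • f 1 ∧
      μ (e 1) (e 2) = s • f 0 ∧
      μ (e 0) (e 3) = s • f 0 ∧
      μ (e 1) (e 3) = (s * (2 - t)) • f 1 ∧
      μ (e 0) (e 1) = 0 ∧
      μ (e 2) (e 3) = 0)
    (j : EuclideanSpace ℝ (Fin 2) →
      (EuclideanSpace ℝ (Fin 4) →ₗ[ℝ] EuclideanSpace ℝ (Fin 4)))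
    (hj : ∀ (Z : EuclideanSpace ℝ (Fin 2)) (X Y : EuclideanSpace ℝ (Fin 4)),
      ⟪j Z X, Y⟫ = ⟪μ X Y, Z⟫) :
    ∀ Z : EuclideanSpace ℝ (Fin 2), Z ≠ 0 → Function.Bijective (j Z) := by
  intro Z hZ
  set e : Fin 4 → EuclideanSpace ℝ (Fin 4) := fun i => EuclideanSpace.single i 1 with he
  set f : Fin 2 → EuclideanSpace ℝ (Fin 2) := fun i => EuclideanSpace.single i 1 with hf
  set s : ℝ := Real.sqrt (2 + t ^ 2 + (2 - t) ^ 2) with hsdef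
  have hspos : 0 < s := Real.sqrt_pos.mpr (by nlinarith)
  obtain ⟨h02, h12, h03, h13, h01, h23⟩ := hs s rfl
  have hself : ∀ W, μ W W = 0 := by
    intro W
    have h := hskew W W
    have h2 : μ W W + μ W W = 0 := by nth_rewrite 1 [h]; exact neg_add_cancel _
    have h3 : (2 : ℝ) • μ W W = 0 := by rw [two_smul]; exact h2
    simpa using h3
  set a : ℝ := Z 0 with ha
  set b : ℝ := Z 1 with hb
  have ipf : ∀ (c : ℝ) (i : Fin 2), ⟪c • f i, Z⟫ = c * Z i := by
    intro c i
    rw [real_inner_smul_left, hf]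
    simp [EuclideanSpace.inner_single_left]
  have hab : a ≠ 0 ∨ b ≠ 0 := by
    by_contra h
    push_neg at h
    apply hZ
    ext i
    fin_cases i
    · simpa using h.1
    · simpa using h.2
  have ht2t : (0 : ℝ) < t * (2 - t) := by nlinarith
  have hpos : 0 < a ^ 2 + t * (2 - t) * b ^ 2 := by
    rcases hab with h | h
    · have h1 : 0 < a ^ 2 := by positivity
      nlinarith [sq_nonneg b]
    · have h1 : 0 < b ^ 2 := by positivity
      nlinarith [sq_nonneg a]
  suffices hinj : Function.Injective (j Z) from
    ⟨hinj, LinearMap.injective_iff_surjective.mp hinj⟩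
  rw [← LinearMap.ker_eq_bot, LinearMap.ker_eq_bot']
  intro X hX0
  have hX : X = X 0 • e 0 + X 1 • e 1 + X 2 • e 2 + X 3 • e 3 := by
    ext k
    fin_cases k <;>
      simp [he, EuclideanSpace.single_apply, PiLp.add_apply, PiLp.smul_apply]
  have key : ∀ Y, ⟪μ X Y, Z⟫ = 0 := by
    intro Y
    rw [← hj, hX0]
    exact inner_zero_left _
  have expand : ∀ Y, ⟪μ X Y, Z⟫ =
      X 0 * ⟪μ (e 0) Y, Z⟫ + X 1 * ⟪μ (e 1) Y, Z⟫ +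
      X 2 * ⟪μ (e 2) Y, Z⟫ + X 3 * ⟪μ (e 3) Y, Z⟫ := by
    intro Y
    conv_lhs => rw [hX]
    simp only [map_add, map_smul, LinearMap.add_apply, LinearMap.smul_apply,
      inner_add_left, real_inner_smul_left]
  have h20 : μ (e 2) (e 0) = (t * s) • f 1 := by rw [hskew, h02]; module
  have h30 : μ (e 3) (e 0) = (-s) • f 0 := by rw [hskew, h03]; module
  have h10 : μ (e 1) (e 0) = (0 : ℝ) • f 0 := by rw [hskew, h01]; module
  have h21 : μ (e 2) (e 1) = (-s) • f 0 := by rw [hskew, h12]; module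
  have h31 : μ (e 3) (e 1) = (-(s * (2 - t))) • f 1 := by rw [hskew, h13]; module
  have h32 : μ (e 3) (e 2) = (0 : ℝ) • f 0 := by rw [hskew, h23]; module
  have h01' : μ (e 0) (e 1) = (0 : ℝ) • f 0 := by rw [h01]; module
  have h23' : μ (e 2) (e 3) = (0 : ℝ) • f 0 := by rw [h23]; module
  have hii : ∀ i : Fin 4, μ (e i) (e i) = (0 : ℝ) • f 0 := by
    intro i; rw [hself]; module
  have E0 : X 0 * (0 * a) + X 1 * (0 * a) + X 2 * (t * s * b) + X 3 * (-s * a) = 0 := by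
    have h := key (e 0)
    rw [expand, hii 0, h10, h20, h30] at h
    simp only [ipf] at h
    rw [← ha, ← hb] at h
    linear_combination h
  have E1 : X 0 * (0 * a) + X 1 * (0 * a) + X 2 * (-s * a) + X 3 * (-(s * (2 - t)) * b) = 0 := by
    have h := key (e 1)
    rw [expand, h01', hii 1, h21, h31] at h
    simp only [ipf] at h
    rw [← ha, ← hb] at h
    linear_combination h
  have E2 : X 0 * (-(t * s) * b) + X 1 * (s * a) + X 2 * (0 * a) + X 3 * (0 * a) = 0 := by
    have h := key (e 2)
    rw [expand, h02, h12, hii 2, h32] at h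
    simp only [ipf] at h
    rw [← ha, ← hb] at h
    linear_combination h
  have E3 : X 0 * (s * a) + X 1 * (s * (2 - t) * b) + X 2 * (0 * a) + X 3 * (0 * a) = 0 := by
    have h := key (e 3)
    rw [expand, h03, h13, h23', hii 3] at h
    simp only [ipf] at h
    rw [← ha, ← hb] at h
    linear_combination h
  have hsne : s ≠ 0 := ne_of_gt hspos
  have hfac : a ^ 2 + t * (2 - t) * b ^ 2 ≠ 0 := ne_of_gt hpos
  have hx0 : X 0 = 0 := by
    have h : s * ((a ^ 2 + t * (2 - t) * b ^ 2) * X 0) = 0 := by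
      linear_combination a * E3 - (2 - t) * b * E2
    have h' := (mul_eq_zero.mp h).resolve_left hsne
    exact (mul_eq_zero.mp h').resolve_left hfac
  have hx1 : X 1 = 0 := by
    have h : s * ((a ^ 2 + t * (2 - t) * b ^ 2) * X 1) = 0 := by
      linear_combination a * E2 + t * b * E3
    have h' := (mul_eq_zero.mp h).resolve_left hsne
    exact (mul_eq_zero.mp h').resolve_left hfac
  have hx2 : X 2 = 0 := by
    have h : s * ((a ^ 2 + t * (2 - t) * b ^ 2) * X 2) = 0 := by
      linear_combination (2 - t) * b * E0 - a * E1
    have h' := (mul_eq_zero.mp h).resolve_left hsne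
    exact (mul_eq_zero.mp h').resolve_left hfac
  have hx3 : X 3 = 0 := by
    have h : s * ((a ^ 2 + t * (2 - t) * b ^ 2) * X 3) = 0 := by
      linear_combination - a * E0 - t * b * E1
    have h' := (mul_eq_zero.mp h).resolve_left hsne
    exact (mul_eq_zero.mp h').resolve_left hfac
  ext k
  fin_cases k
  · simpa using hx0
  · simpa using hx1
  · simpa using hx2
  · simpa using hx3
end
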